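/- Let C be a closed, generating cone in a finite-dimensional real vector space V, and suppose C is irreducible (not a nontrivial direct sum of cones). If T : V → V is linear and there exist scalars c_ω ≥ 0 such that T(ω) = c_ω ω for every ω generating an extreme ray of C, then T is a nonnegative scalar multiple of the identity. -/

import Mathlib

/-- A (convex) cone in a real vector space, as a set. -/
def IsConeSet {V : Type*} [AddCommGroup V] [Module ℝ V] (C : Set V) : Prop :=
  (0 : V) ∈ C ∧ (∀ x ∈ C, ∀ t : ℝ, 0 ≤ t → t • x ∈ C) ∧ ∀ x ∈ C, ∀ y ∈ C, x + y ∈ C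

/-- `ω` generates an extreme ray of the cone `C`. -/
def IsExtremeRayGen {V : Type*} [AddCommGroup V] [Module ℝ V] (C : Set V) (ω : V) : Prop :=
  ω ∈ C ∧ ω ≠ 0 ∧ ∀ x ∈ C, ∀ y ∈ C, x + y = ω → ∃ t : ℝ, 0 ≤ t ∧ x = t • ω

/-- An irreducible cone: not a nontrivial direct sum of two cones spanning
independent subspaces. -/
def IsIrreducibleCone {V : Type*} [AddCommGroup V] [Module ℝ V] (C : Set V) : Prop :=
  IsConeSet C ∧ ¬∃ D E : Set V, IsConeSet D ∧ IsConeSet E ∧ D ≠ {0} ∧ E ≠ {0} ∧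
    (Submodule.span ℝ D ⊓ Submodule.span ℝ E = ⊥) ∧
    C = {x | ∃ d ∈ D, ∃ e ∈ E, x = d + e}

/-!
Normalising a closed pointed cone by a strictly positive functional `f` gives a compact convex
base `C ∩ {f = 1}`, whose extreme points generate extreme rays of `C`; by Krein–Milman, `C` is
contained in every closed cone containing its extreme rays. If `T` scales the extreme rays, fix
one eigenvalue `c` attained on them and split `V` into the `c`-eigenspace and the sum of the other
eigenspaces: every extreme ray lies in one of the two, so `C` is the direct sum of its parts in
them. Irreducibility kills the second part, so every extreme ray, hence all of `V`, lies in the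
`c`-eigenspace.
-/

open Set

section Cone

variable {V : Type*} [AddCommGroup V] [Module ℝ V] {C D : Set V}

theorem IsConeSet.convex (hC : IsConeSet C) : Convex ℝ C := fun x hx y hy a b ha hb _ =>
  hC.2.2 _ (hC.2.1 x hx a ha) _ (hC.2.1 y hy b hb)

theorem IsConeSet.inter (hC : IsConeSet C) (hD : IsConeSet D) : IsConeSet (C ∩ D) :=
  ⟨⟨hC.1, hD.1⟩, fun x hx t ht => ⟨hC.2.1 x hx.1 t ht, hD.2.1 x hx.2 t ht⟩,
    fun x hx y hy => ⟨hC.2.2 x hx.1 y hy.1, hD.2.2 x hx.2 y hy.2⟩⟩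

theorem Submodule.isConeSet (W : Submodule ℝ V) : IsConeSet (W : Set V) :=
  ⟨W.zero_mem, fun x hx t _ => W.smul_mem t hx, fun x hx y hy => W.add_mem hx hy⟩

theorem IsConeSet.setOf_add (hC : IsConeSet C) (hD : IsConeSet D) :
    IsConeSet {x | ∃ c ∈ C, ∃ d ∈ D, x = c + d} := by
  refine ⟨⟨0, hC.1, 0, hD.1, (add_zero 0).symm⟩, ?_, ?_⟩
  · rintro _ ⟨c, hc, d, hd, rfl⟩ t ht
    exact ⟨t • c, hC.2.1 c hc t ht, t • d, hD.2.1 d hd t ht, smul_add t c d⟩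
  · rintro _ ⟨c, hc, d, hd, rfl⟩ _ ⟨c', hc', d', hd', rfl⟩
    exact ⟨c + c', hC.2.2 c hc c' hc', d + d', hD.2.2 d hd d' hd', add_add_add_comm c d c' d'⟩

theorem IsIrreducibleCone.inter_eq_zero_of_disjoint (hirr : IsIrreducibleCone C)
    {W₁ W₂ : Submodule ℝ V} (hW : Disjoint W₁ W₂)
    (hsplit : C ⊆ {x | ∃ d ∈ C ∩ W₁, ∃ e ∈ C ∩ W₂, x = d + e}) :
    C ∩ W₁ = {0} ∨ C ∩ W₂ = {0} := by
  by_contra! h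
  refine hirr.2 ⟨C ∩ W₁, C ∩ W₂, hirr.1.inter W₁.isConeSet, hirr.1.inter W₂.isConeSet, h.1, h.2,
    disjoint_iff.1 (hW.mono (Submodule.span_le.2 inter_subset_right)
      (Submodule.span_le.2 inter_subset_right)), hsplit.antisymm ?_⟩
  rintro _ ⟨d, hd, e, he, rfl⟩
  exact hirr.1.2.2 d hd.1 e he.1

theorem IsConeSet.inv_smul_mem_inter_level (hC : IsConeSet C) (f : V →ₗ[ℝ] ℝ) {x : V}
    (hx : x ∈ C) (hfx : 0 < f x) : (f x)⁻¹ • x ∈ C ∩ {y | f y = 1} :=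
  ⟨hC.2.1 x hx _ (inv_nonneg.2 hfx.le), by simp [inv_mul_cancel₀ hfx.ne']⟩

theorem IsConeSet.isExtremeRayGen_of_mem_extremePoints (hC : IsConeSet C) {f : V →ₗ[ℝ] ℝ}
    (hf : ∀ x ∈ C, x ≠ 0 → 0 < f x) {ω : V}
    (hω : ω ∈ (C ∩ {y | f y = 1}).extremePoints ℝ) : IsExtremeRayGen C ω := by
  obtain ⟨⟨hωC, hfω⟩, hωext⟩ := mem_extremePoints.1 hω
  refine ⟨hωC, by rintro rfl; simp at hfω, fun x hx y hy hxy => ?_⟩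
  rcases eq_or_ne x 0 with rfl | hx0
  · exact ⟨0, le_rfl, (zero_smul ℝ ω).symm⟩
  rcases eq_or_ne y 0 with rfl | hy0
  · exact ⟨1, zero_le_one, by rw [one_smul, ← hxy, add_zero]⟩
  have hfx := hf x hx hx0
  have hfy := hf y hy hy0
  -- `ω` is the convex combination of the normalisations of `x` and `y` with weights `f x, f y`
  have hseg : ω ∈ openSegment ℝ ((f x)⁻¹ • x) ((f y)⁻¹ • y) :=
    ⟨f x, f y, hfx, hfy, by rw [← map_add, hxy, hfω],
      by rw [smul_inv_smul₀ hfx.ne', smul_inv_smul₀ hfy.ne', hxy]⟩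
  have hxω := (hωext _ (hC.inv_smul_mem_inter_level f hx hfx) _
    (hC.inv_smul_mem_inter_level f hy hfy) hseg).1
  exact ⟨f x, hfx.le, by rw [← hxω, smul_inv_smul₀ hfx.ne']⟩

end Cone

theorem IsConeSet.exists_dual_nonneg_of_notMem {V : Type*} [AddCommGroup V] [Module ℝ V]
    [TopologicalSpace V] [IsTopologicalAddGroup V] [ContinuousSMul ℝ V] [LocallyConvexSpace ℝ V]
    {C : Set V} (hC : IsConeSet C) (hclosed : IsClosed C) {z : V} (hz : z ∉ C) :
    ∃ g : StrongDual ℝ V, (∀ x ∈ C, 0 ≤ g x) ∧ g z < 0 := by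
  obtain ⟨g, u, hgC, hgz⟩ := geometric_hahn_banach_closed_point hC.convex hclosed hz
  have hu : 0 < u := by simpa using hgC 0 hC.1
  -- `g` is bounded above on the cone, hence nonpositive there
  have hg : ∀ x ∈ C, g x ≤ 0 := by
    intro x hx
    by_contra! hgx
    have h := hgC ((u / g x) • x) (hC.2.1 x hx _ (by positivity))
    rw [map_smul, smul_eq_mul, div_mul_cancel₀ u hgx.ne'] at h
    exact lt_irrefl u h
  exact ⟨-g, fun x hx => by simpa using hg x hx, by simp; linarith⟩

section FiniteDimensional

variable {V : Type*} [NormedAddCommGroup V] [NormedSpace ℝ V] [FiniteDimensional ℝ V]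
  {C : Set V}

theorem IsConeSet.exists_pos_functional (hC : IsConeSet C) (hclosed : IsClosed C)
    (hpointed : ∀ x ∈ C, -x ∈ C → x = 0) :
    ∃ f : StrongDual ℝ V, ∀ x ∈ C, x ≠ 0 → 0 < f x := by
  set S : Set (Module.Dual ℝ V) := {g | ∀ x ∈ C, 0 ≤ g x}
  have hS : Submodule.span ℝ S = ⊤ := by
    refine Submodule.span_eq_top_of_ne_zero fun z hz => ?_
    by_cases hzC : z ∈ C
    · obtain ⟨g, hg, hgz⟩ := hC.exists_dual_nonneg_of_notMem hclosed fun h => hz (hpointed z hzC h)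
      exact ⟨g, hg, fun h => by rw [ContinuousLinearMap.coe_coe] at h; simp [h] at hgz⟩
    · obtain ⟨g, hg, hgz⟩ := hC.exists_dual_nonneg_of_notMem hclosed hzC
      exact ⟨g, hg, hgz.ne⟩
  obtain ⟨b, hbS, hb, hbind⟩ := exists_linearIndependent ℝ S
  have hbfin := hbind.setFinite
  refine ⟨LinearMap.toContinuousLinearMap (∑ g ∈ hbfin.toFinset, g), fun x hx hx0 => ?_⟩
  have hnonneg : ∀ g ∈ hbfin.toFinset, 0 ≤ g x := fun g hg => hbS (hbfin.mem_toFinset.1 hg) x hx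
  refine lt_of_le_of_ne (by simpa using Finset.sum_nonneg hnonneg) fun hsum => hx0 ?_
  have hvanish : ∀ g ∈ b, g x = 0 := fun g hg =>
    (Finset.sum_eq_zero_iff_of_nonneg hnonneg).1 (by simpa using hsum.symm) g
      (hbfin.mem_toFinset.2 hg)
  have hker : (⊤ : Submodule ℝ (Module.Dual ℝ V)) ≤ LinearMap.ker (Module.Dual.eval ℝ V x) := by
    rw [← hS, ← hb, Submodule.span_le]
    exact hvanish
  exact (Module.forall_dual_apply_eq_zero_iff ℝ x).1 fun φ => hker Submodule.mem_top

theorem IsConeSet.isCompact_inter_level (hC : IsConeSet C) (hclosed : IsClosed C)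
    {f : StrongDual ℝ V} (hf : ∀ x ∈ C, x ≠ 0 → 0 < f x) : IsCompact (C ∩ {y | f y = 1}) := by
  obtain ⟨m, hm, hmf⟩ := ((isCompact_sphere (0 : V) 1).inter_left hclosed).exists_forall_le'
    f.continuous.continuousOn fun y hy =>
      hf y hy.1 (ne_zero_of_mem_unit_sphere ⟨y, hy.2⟩)
  refine Metric.isCompact_of_isClosed_isBounded
    (hclosed.inter (isClosed_eq f.continuous continuous_const))
    (isBounded_iff_forall_norm_le.2 ⟨m⁻¹, fun x ⟨hx, hfx⟩ => ?_⟩)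
  rcases eq_or_ne x 0 with rfl | hx0
  · simpa using hm.le
  have hnx : 0 < ‖x‖ := norm_pos_iff.2 hx0
  -- `m` bounds `f` below on `C ∩ sphere 0 1`; apply this to `‖x‖⁻¹ • x`
  have h := hmf (‖x‖⁻¹ • x) ⟨hC.2.1 x hx _ (inv_nonneg.2 hnx.le), by
    simp [norm_smul, hnx.ne']⟩
  rw [map_smul, smul_eq_mul, hfx, mul_one] at h
  exact (le_inv_comm₀ hm hnx).1 h
theorem IsConeSet.subset_of_forall_isExtremeRayGen_mem (hC : IsConeSet C) (hclosed : IsClosed C)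
    (hpointed : ∀ x ∈ C, -x ∈ C → x = 0) {S : Set V} (hS : IsConeSet S) (hSclosed : IsClosed S)
    (hext : ∀ ω, IsExtremeRayGen C ω → ω ∈ S) : C ⊆ S := by
  obtain ⟨f, hf⟩ := hC.exists_pos_functional hclosed hpointed
  have hBconvex : Convex ℝ (C ∩ {y | f y = 1}) :=
    hC.convex.inter (convex_hyperplane f.isLinear 1)
  have hBS : C ∩ {y | f y = 1} ⊆ S := by
    refine (closure_convexHull_extremePoints (hC.isCompact_inter_level hclosed hf)
      hBconvex).symm.subset.trans ?_
    exact closure_minimal (convexHull_min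
      (fun ω hω => hext ω (hC.isExtremeRayGen_of_mem_extremePoints (f := f) hf hω)) hS.convex)
      hSclosed
  intro x hx
  rcases eq_or_ne x 0 with rfl | hx0
  · exact hS.1
  have hfx := hf x hx hx0
  simpa [smul_inv_smul₀ hfx.ne'] using
    hS.2.1 _ (hBS (hC.inv_smul_mem_inter_level (f : V →ₗ[ℝ] ℝ) hx hfx)) _ hfx.le

theorem isClosed_setOf_add_of_disjoint {W₁ W₂ : Submodule ℝ V} (hW : Disjoint W₁ W₂)
    {D E : Set V} (hD : D ⊆ W₁) (hE : E ⊆ W₂) (hDclosed : IsClosed D) (hEclosed : IsClosed E) :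
    IsClosed {x | ∃ d ∈ D, ∃ e ∈ E, x = d + e} := by
  set φ : W₁ × W₂ →ₗ[ℝ] V := W₁.subtype.coprod W₂.subtype
  have hφ : LinearMap.ker φ = ⊥ := by
    rw [LinearMap.ker_coprod_of_disjoint_range _ _ (by simpa using hW)]
    simp
  have himage : {x | ∃ d ∈ D, ∃ e ∈ E, x = d + e} =
      φ '' ((Subtype.val ⁻¹' D) ×ˢ (Subtype.val ⁻¹' E)) := by
    ext x
    constructor
    · rintro ⟨d, hd, e, he, rfl⟩
      exact ⟨(⟨d, hD hd⟩, ⟨e, hE he⟩), ⟨hd, he⟩, rfl⟩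
    · rintro ⟨⟨d, e⟩, ⟨hd, he⟩, rfl⟩
      exact ⟨d, hd, e, he, rfl⟩
  rw [himage]
  exact (LinearMap.isClosedEmbedding_of_injective hφ).isClosedMap _
    ((hDclosed.preimage continuous_subtype_val).prod (hEclosed.preimage continuous_subtype_val))

theorem IsConeSet.eq_top_of_forall_isExtremeRayGen_mem (hC : IsConeSet C)
    (hclosed : IsClosed C) (hpointed : ∀ x ∈ C, -x ∈ C → x = 0)
    (hgen : Submodule.span ℝ C = ⊤) {W : Submodule ℝ V}
    (hW : ∀ ω, IsExtremeRayGen C ω → ω ∈ W) : W = ⊤ :=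
  top_unique <| hgen ▸ Submodule.span_le.2 <|
    hC.subset_of_forall_isExtremeRayGen_mem hclosed hpointed W.isConeSet
      W.closed_of_finiteDimensional hW

theorem IsIrreducibleCone.forall_isExtremeRayGen_mem_of_disjoint (hirr : IsIrreducibleCone C)
    (hclosed : IsClosed C) (hpointed : ∀ x ∈ C, -x ∈ C → x = 0) {W₁ W₂ : Submodule ℝ V}
    (hW : Disjoint W₁ W₂) (hsplit : ∀ ω, IsExtremeRayGen C ω → ω ∈ W₁ ∨ ω ∈ W₂)
    {ω₁ : V} (hω₁ : IsExtremeRayGen C ω₁) (hω₁W : ω₁ ∈ W₁) :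
    ∀ ω, IsExtremeRayGen C ω → ω ∈ W₁ := by
  have hC := hirr.1
  have hCsplit : C ⊆ {x | ∃ d ∈ C ∩ W₁, ∃ e ∈ C ∩ W₂, x = d + e} := by
    refine hC.subset_of_forall_isExtremeRayGen_mem hclosed hpointed
      ((hC.inter W₁.isConeSet).setOf_add (hC.inter W₂.isConeSet))
      (isClosed_setOf_add_of_disjoint hW inter_subset_right inter_subset_right
        (hclosed.inter W₁.closed_of_finiteDimensional)
        (hclosed.inter W₂.closed_of_finiteDimensional)) fun ω hω => ?_
    rcases hsplit ω hω with h | h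
    · exact ⟨ω, ⟨hω.1, h⟩, 0, ⟨hC.1, W₂.zero_mem⟩, (add_zero ω).symm⟩
    · exact ⟨0, ⟨hC.1, W₁.zero_mem⟩, ω, ⟨hω.1, h⟩, (zero_add ω).symm⟩
  have hC₂ : C ∩ W₂ = {0} := (hirr.inter_eq_zero_of_disjoint hW hCsplit).resolve_left
    fun h => hω₁.2.1 (h.subset ⟨hω₁.1, hω₁W⟩)
  exact fun ω hω => (hsplit ω hω).resolve_right fun h => hω.2.1 (hC₂.subset ⟨hω.1, h⟩)

end FiniteDimensional

/-- If `C` is a closed, pointed, generating, irreducible cone in a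
finite-dimensional space and the linear map `T` scales every extreme ray generator of `C`
by a nonnegative constant, then `T` is a nonnegative multiple of the identity. -/
theorem nondisturbing_on_irreducible_cone_is_scalar
    {V : Type*} [NormedAddCommGroup V] [NormedSpace ℝ V] [FiniteDimensional ℝ V]
    (C : Set V) (hC : IsConeSet C) (hclosed : IsClosed C)
    (hpointed : ∀ x ∈ C, -x ∈ C → x = 0)
    (hgen : Submodule.span ℝ C = ⊤)
    (hirr : IsIrreducibleCone C)
    (T : V →ₗ[ℝ] V)
    (hT : ∀ ω, IsExtremeRayGen C ω → ∃ c : ℝ, 0 ≤ c ∧ T ω = c • ω) :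
    ∃ c : ℝ, 0 ≤ c ∧ ∀ x : V, T x = c • x := by
  by_cases hext : ∃ ω, IsExtremeRayGen C ω
  swap
  · have hbot : (⊥ : Submodule ℝ V) = ⊤ :=
      hC.eq_top_of_forall_isExtremeRayGen_mem hclosed hpointed hgen fun ω hω =>
        (hext ⟨ω, hω⟩).elim
    refine ⟨0, le_rfl, fun x => ?_⟩
    obtain rfl : x = 0 := (Submodule.mem_bot ℝ).1 (hbot ▸ Submodule.mem_top)
    simp
  obtain ⟨ω₁, hω₁⟩ := hext
  obtain ⟨c, hc, hTω₁⟩ := hT ω₁ hω₁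
  set W₂ := ⨆ (μ : ℝ) (_ : μ ≠ c), Module.End.eigenspace T μ
  have hsplit : ∀ ω, IsExtremeRayGen C ω → ω ∈ Module.End.eigenspace T c ∨ ω ∈ W₂ := by
    intro ω hω
    obtain ⟨μ, -, hTω⟩ := hT ω hω
    rcases eq_or_ne μ c with rfl | hμ
    · exact .inl (Module.End.mem_eigenspace_iff.2 hTω)
    · exact .inr ((le_iSup₂_of_le μ hμ le_rfl : Module.End.eigenspace T μ ≤ W₂)
        (Module.End.mem_eigenspace_iff.2 hTω))
  have hW₁ : Module.End.eigenspace T c = ⊤ :=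
    hC.eq_top_of_forall_isExtremeRayGen_mem hclosed hpointed hgen <|
      hirr.forall_isExtremeRayGen_mem_of_disjoint hclosed hpointed
        (Module.End.eigenspaces_iSupIndep T c) hsplit hω₁ (Module.End.mem_eigenspace_iff.2 hTω₁)
  exact ⟨c, hc, fun x => Module.End.mem_eigenspace_iff.1 (hW₁ ▸ Submodule.mem_top)⟩
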